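/- Every automorphism σ of SV = SV[Γ,s] preserves the even part: σ(SV_0̄) ⊆ SV_0̄. -/
import Mathlib


noncomputable section

namespace SVSuper

variable (Γ : AddSubgroup ℂ) (s : ℂ)

/-- Basis index type of `SV[Γ,s]`: `Sum.inl (α, i)` stands for `L_{α,i}` (`α ∈ Γ`),
`Sum.inr (μ, j)` stands for `G_{μ,j}` (`μ ∈ s + Γ`). -/
abbrev Idx : Type := (Γ × ℕ) ⊕ ({μ : ℂ // μ - s ∈ Γ} × ℕ)

/-- The underlying vector space of `SV[Γ,s]`: the free `ℂ`-module on `Idx`. -/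
abbrev SV : Type := Idx Γ s →₀ ℂ

/-- The basis vector `L_{α,i}`. -/
def lgen (α : ℂ) (hα : α ∈ Γ) (i : ℕ) : SV Γ s :=
  Finsupp.single (Sum.inl (⟨α, hα⟩, i)) 1

/-- The basis vector `G_{μ,j}`. -/
def ggen (μ : ℂ) (hμ : μ - s ∈ Γ) (j : ℕ) : SV Γ s :=
  Finsupp.single (Sum.inr (⟨μ, hμ⟩, j)) 1

theorem memLG {α μ : ℂ} (hα : α ∈ Γ) (hμ : μ - s ∈ Γ) : α + μ - s ∈ Γ := by
  have h : α + μ - s = α + (μ - s) := by ring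
  rw [h]; exact add_mem hα hμ

theorem memGG (hs : 2 * s ∈ Γ) {μ ν : ℂ} (hμ : μ - s ∈ Γ) (hν : ν - s ∈ Γ) :
    μ + ν ∈ Γ := by
  have h : μ + ν = (μ - s) + (ν - s) + 2 * s := by ring
  rw [h]; exact add_mem (add_mem hμ hν) hs

/-- The bracket on basis vectors (any symbol with second index `-1` is interpreted as `0`;
here this is automatic since the corresponding coefficient vanishes when `i = j = 0`). -/
def bk (hs : 2 * s ∈ Γ) : Idx Γ s → Idx Γ s → SV Γ s
  | Sum.inl (⟨α, hα⟩, i), Sum.inl (⟨β, hβ⟩, j) =>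
      (β - α) • lgen Γ s (α + β) (add_mem hα hβ) (i + j)
        + ((j : ℂ) - (i : ℂ)) • lgen Γ s (α + β) (add_mem hα hβ) (i + j - 1)
  | Sum.inl (⟨α, hα⟩, i), Sum.inr (⟨μ, hμ⟩, j) =>
      (μ - α / 2) • ggen Γ s (α + μ) (memLG Γ s hα hμ) (i + j)
        + ((j : ℂ) - (i : ℂ) / 2) • ggen Γ s (α + μ) (memLG Γ s hα hμ) (i + j - 1)
  | Sum.inr (⟨μ, hμ⟩, i), Sum.inl (⟨α, hα⟩, j) =>
      -((μ - α / 2) • ggen Γ s (α + μ) (memLG Γ s hα hμ) (j + i)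
        + ((i : ℂ) - (j : ℂ) / 2) • ggen Γ s (α + μ) (memLG Γ s hα hμ) (j + i - 1))
  | Sum.inr (⟨μ, hμ⟩, i), Sum.inr (⟨ν, hν⟩, j) =>
      (2 : ℂ) • lgen Γ s (μ + ν) (memGG Γ s hs hμ hν) (i + j)

/-- The bilinear bracket of `SV[Γ,s]`. -/
def bkt (hs : 2 * s ∈ Γ) (x y : SV Γ s) : SV Γ s :=
  x.sum fun a ca => y.sum fun b cb => (ca * cb) • bk Γ s hs a b

/-- `x` lies in the even part `SV_0̄` (the span of the `L_{α,i}`). -/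
def IsEvenElt (x : SV Γ s) : Prop := ∀ b, x (Sum.inr b) = 0

/-- `x` lies in the odd part `SV_1̄` (the span of the `G_{μ,j}`). -/
def IsOddElt (x : SV Γ s) : Prop := ∀ a, x (Sum.inl a) = 0

/-- `x` is `ℤ₂`-homogeneous. -/
def IsHomog (x : SV Γ s) : Prop := IsEvenElt Γ s x ∨ IsOddElt Γ s x

/-- `x` lies in the degree-`γ` component `SV_γ = span{L_{γ,i}, G_{γ,i}}` of the `Ω`-grading. -/
def InDeg (γ : ℂ) (x : SV Γ s) : Prop :=
  (∀ p : Γ × ℕ, (p.1 : ℂ) ≠ γ → x (Sum.inl p) = 0) ∧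
  (∀ q : {μ : ℂ // μ - s ∈ Γ} × ℕ, (q.1 : ℂ) ≠ γ → x (Sum.inr q) = 0)

/-- The group `Ω`, generated by `Γ ∪ {s}`. -/
def Omega : AddSubgroup ℂ := Γ ⊔ AddSubgroup.closure {s}

theorem gamma_mem_Omega {α : ℂ} (hα : α ∈ Γ) : α ∈ Omega Γ s :=
  AddSubgroup.mem_sup_left hα

theorem s_mem_Omega : s ∈ Omega Γ s :=
  AddSubgroup.mem_sup_right (AddSubgroup.subset_closure (Set.mem_singleton s))

theorem smu_mem_Omega {μ : ℂ} (hμ : μ - s ∈ Γ) : μ ∈ Omega Γ s := by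
  have h := add_mem (gamma_mem_Omega Γ s hμ) (s_mem_Omega Γ s)
  rwa [sub_add_cancel] at h

/-- The `Ω`-degree of a basis index. -/
def idxDeg : Idx Γ s → ℂ
  | Sum.inl p => (p.1 : ℂ)
  | Sum.inr q => (q.1 : ℂ)

theorem idxDeg_mem (a : Idx Γ s) : idxDeg Γ s a ∈ Omega Γ s := by
  cases a with
  | inl p => exact gamma_mem_Omega Γ s p.1.2
  | inr q => exact smu_mem_Omega Γ s q.1.2

/-- The derivation `D_φ` attached to a group homomorphism `φ : (Ω,+) → (ℂ,+)`:
`D_φ (L_{α,i}) = φ(α) • L_{α,i}` and `D_φ (G_{μ,j}) = φ(μ) • G_{μ,j}`. -/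
def Dphi (φ : ↥(Omega Γ s) →+ ℂ) : SV Γ s →ₗ[ℂ] SV Γ s :=
  Finsupp.lsum ℂ fun a => φ ⟨idxDeg Γ s a, idxDeg_mem Γ s a⟩ • Finsupp.lsingle a

/-- `D` is a parity-`0` (even) derivation of `SV[Γ,s]`. -/
def IsEvenDer (hs : 2 * s ∈ Γ) (D : SV Γ s →ₗ[ℂ] SV Γ s) : Prop :=
  (∀ x, IsEvenElt Γ s x → IsEvenElt Γ s (D x)) ∧
  (∀ x, IsOddElt Γ s x → IsOddElt Γ s (D x)) ∧
  (∀ x y, IsHomog Γ s x →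
    D (bkt Γ s hs x y) = bkt Γ s hs (D x) y + bkt Γ s hs x (D y))

/-- `D` is a parity-`1` (odd) derivation of `SV[Γ,s]`. -/
def IsOddDer (hs : 2 * s ∈ Γ) (D : SV Γ s →ₗ[ℂ] SV Γ s) : Prop :=
  (∀ x, IsEvenElt Γ s x → IsOddElt Γ s (D x)) ∧
  (∀ x, IsOddElt Γ s x → IsEvenElt Γ s (D x)) ∧
  (∀ x y, IsEvenElt Γ s x →
    D (bkt Γ s hs x y) = bkt Γ s hs (D x) y + bkt Γ s hs x (D y)) ∧
  (∀ x y, IsOddElt Γ s x →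
    D (bkt Γ s hs x y) = bkt Γ s hs (D x) y - bkt Γ s hs x (D y))

/-- `D` is a derivation of `SV[Γ,s]`: a sum of an even and an odd derivation. -/
def IsDer (hs : 2 * s ∈ Γ) (D : SV Γ s →ₗ[ℂ] SV Γ s) : Prop :=
  ∃ D0 D1, IsEvenDer Γ s hs D0 ∧ IsOddDer Γ s hs D1 ∧ D = D0 + D1

/-- `D` has degree `γ`: it maps `SV_δ` into `SV_{δ+γ}` for every `δ`. -/
def HasDeg (γ : ℂ) (D : SV Γ s →ₗ[ℂ] SV Γ s) : Prop :=
  ∀ (δ : ℂ) (x : SV Γ s), InDeg Γ s δ x → InDeg Γ s (δ + γ) (D x)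

/-- `ψ` is a 2-cocycle on `SV[Γ,s]` (super skew-symmetry and super Jacobi identity,
with the sign `(-1)^{|x||y|}` spelled out according to the parities). -/
def IsCocycle (hs : 2 * s ∈ Γ) (ψ : SV Γ s →ₗ[ℂ] SV Γ s →ₗ[ℂ] ℂ) : Prop :=
  (∀ x y, IsHomog Γ s x → IsHomog Γ s y → (IsEvenElt Γ s x ∨ IsEvenElt Γ s y) →
    ψ x y = - ψ y x) ∧
  (∀ x y, IsOddElt Γ s x → IsOddElt Γ s y → ψ x y = ψ y x) ∧
  (∀ x y z, IsHomog Γ s x → IsHomog Γ s y → (IsEvenElt Γ s x ∨ IsEvenElt Γ s y) →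
    ψ x (bkt Γ s hs y z) = ψ (bkt Γ s hs x y) z + ψ y (bkt Γ s hs x z)) ∧
  (∀ x y z, IsOddElt Γ s x → IsOddElt Γ s y →
    ψ x (bkt Γ s hs y z) = ψ (bkt Γ s hs x y) z - ψ y (bkt Γ s hs x z))

/-- `f : SV → ℂ` satisfies the recursive formulas associated to the 2-cocycle `ψ`. -/
def IsAssocMap (hs : 2 * s ∈ Γ) (ψ : SV Γ s →ₗ[ℂ] SV Γ s →ₗ[ℂ] ℂ)
    (f : SV Γ s →ₗ[ℂ] ℂ) : Prop :=
  (∀ i : ℕ, f (lgen Γ s 0 (zero_mem Γ) i)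
      = ψ (lgen Γ s 0 (zero_mem Γ) 0) (lgen Γ s 0 (zero_mem Γ) (i + 1)) / (i + 1)) ∧
  (∀ (α : ℂ) (hα : α ∈ Γ) (i : ℕ), α ≠ 0 →
    f (lgen Γ s α hα i)
      = (ψ (lgen Γ s 0 (zero_mem Γ) 0) (lgen Γ s α hα i) - (i : ℂ) * f (lgen Γ s α hα (i - 1))) / α) ∧
  (∀ (h0 : (0 : ℂ) - s ∈ Γ) (i : ℕ),
    f (ggen Γ s 0 h0 i) = (2 / (2 * (i : ℂ) - 1)) * ψ (lgen Γ s 0 (zero_mem Γ) 1) (ggen Γ s 0 h0 i)) ∧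
  (∀ (μ : ℂ) (hμ : μ - s ∈ Γ) (i : ℕ), μ ≠ 0 →
    f (ggen Γ s μ hμ i)
      = (ψ (lgen Γ s 0 (zero_mem Γ) 0) (ggen Γ s μ hμ i) - (i : ℂ) * f (ggen Γ s μ hμ (i - 1))) / μ)


section Aux

lemma bk_inr_antisymm (hs : 2 * s ∈ Γ) (a b : Idx Γ s)
    (q : {μ : ℂ // μ - s ∈ Γ} × ℕ) :
    bk Γ s hs a b (Sum.inr q) + bk Γ s hs b a (Sum.inr q) = 0 := by
  rcases a with ⟨⟨α, hα⟩, i⟩ | ⟨⟨μ, hμ⟩, i⟩ <;> rcases b with ⟨⟨β, hβ⟩, j⟩ | ⟨⟨ν, hν⟩, j⟩ <;>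
    simp [bk, lgen, ggen, Finsupp.single_apply] <;> ring

lemma even_bkt_self (hs : 2 * s ∈ Γ) (y : SV Γ s) :
    IsEvenElt Γ s (bkt Γ s hs y y) := by
  intro q
  rw [bkt, Finsupp.sum_apply]
  rw [Finsupp.sum, Finset.sum_congr rfl (fun a _ => Finsupp.sum_apply)]
  simp only [Finsupp.sum, Finsupp.smul_apply, smul_eq_mul]
  set g : Idx Γ s → Idx Γ s → ℂ := fun a b => y a * y b * bk Γ s hs a b (Sum.inr q) with hg
  have hanti : ∀ a b, g a b = - g b a := by
    intro a b
    have h := bk_inr_antisymm Γ s hs a b q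
    simp only [hg]
    rw [eq_neg_of_add_eq_zero_left h]; ring
  have hS : (∑ a ∈ y.support, ∑ b ∈ y.support, g a b)
      = - ∑ a ∈ y.support, ∑ b ∈ y.support, g a b := by
    conv_lhs => rw [Finset.sum_comm]
    rw [← Finset.sum_neg_distrib]
    refine Finset.sum_congr rfl fun a _ => ?_
    rw [← Finset.sum_neg_distrib]
    exact Finset.sum_congr rfl fun b _ => by rw [hanti b a]
  have h0 := add_self_eq_zero.mp (neg_eq_iff_add_eq_zero.mp hS.symm)
  simpa [hg] using h0

lemma bkt_single_single (hs : 2 * s ∈ Γ) (a b : Idx Γ s) (c d : ℂ) :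
    bkt Γ s hs (Finsupp.single a c) (Finsupp.single b d) = (c * d) • bk Γ s hs a b := by
  rw [bkt]
  rw [Finsupp.sum_single_index (by simp [Finsupp.sum])]
  rw [Finsupp.sum_single_index (by simp)]

lemma bkt_add_left (hs : 2 * s ∈ Γ) (x x' y : SV Γ s) :
    bkt Γ s hs (x + x') y = bkt Γ s hs x y + bkt Γ s hs x' y := by
  unfold bkt
  rw [Finsupp.sum_add_index']
  · intro a; simp [Finsupp.sum]
  · intro a c c'
    rw [← Finsupp.sum_add]
    exact Finsupp.sum_congr fun b _ => by rw [add_mul, add_smul]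

lemma bkt_add_right (hs : 2 * s ∈ Γ) (x y y' : SV Γ s) :
    bkt Γ s hs x (y + y') = bkt Γ s hs x y + bkt Γ s hs x y' := by
  unfold bkt
  rw [← Finsupp.sum_add]
  refine Finsupp.sum_congr fun a _ => ?_
  rw [Finsupp.sum_add_index']
  · intro b; simp
  · intro b c c'; rw [mul_add, add_smul]

lemma lgen_congr {α β : ℂ} (hα : α ∈ Γ) (hβ : β ∈ Γ) {i j : ℕ} (h : α = β) (h' : i = j) :
    lgen Γ s α hα i = lgen Γ s β hβ j := by subst h; subst h'; rfl

/-- The span of squares `[y,y]`. -/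
def Qspan (hs : 2 * s ∈ Γ) : Submodule ℂ (SV Γ s) :=
  Submodule.span ℂ (Set.range fun y => bkt Γ s hs y y)

lemma lgen_mem_Qspan (hs : 2 * s ∈ Γ) (α : ℂ) (hα : α ∈ Γ) (k : ℕ) :
    lgen Γ s α hα k ∈ Qspan Γ s hs := by
  have h1 : s - s ∈ Γ := by rw [sub_self]; exact zero_mem Γ
  have h2 : (α - s) - s ∈ Γ := by
    have : (α - s) - s = α - 2 * s := by ring
    rw [this]; exact sub_mem hα hs
  set u : SV Γ s := ggen Γ s s h1 0 with hu
  set v : SV Γ s := ggen Γ s (α - s) h2 k with hv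
  have hmem : ∀ w : SV Γ s, bkt Γ s hs w w ∈ Qspan Γ s hs := fun w =>
    Submodule.subset_span ⟨w, rfl⟩
  have huv : bkt Γ s hs u v = (2 : ℂ) • lgen Γ s α hα k := by
    rw [hu, hv, ggen, ggen, bkt_single_single]
    simp only [bk, one_mul, one_smul]
    congr 1
    exact lgen_congr Γ s _ hα (by ring) (by omega)
  have hvu : bkt Γ s hs v u = (2 : ℂ) • lgen Γ s α hα k := by
    rw [hu, hv, ggen, ggen, bkt_single_single]
    simp only [bk, one_mul, one_smul]
    congr 1
    exact lgen_congr Γ s _ hα (by ring) (by omega)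
  have key : lgen Γ s α hα k
      = (4 : ℂ)⁻¹ • (bkt Γ s hs (u + v) (u + v) - bkt Γ s hs u u - bkt Γ s hs v v) := by
    rw [bkt_add_left, bkt_add_right, bkt_add_right, huv, hvu]
    rw [show ∀ A B C : SV Γ s, A + (2:ℂ) • C + ((2:ℂ) • C + B) - A - B = (4:ℂ) • C by
      intro A B C
      rw [show (4:ℂ) = 2 + 2 by norm_num, add_smul]
      abel]
    rw [smul_smul]; norm_num
  rw [key]
  exact Submodule.smul_mem _ _ (Submodule.sub_mem _ (Submodule.sub_mem _ (hmem _) (hmem _)) (hmem _))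

lemma even_mem_Qspan (hs : 2 * s ∈ Γ) (x : SV Γ s) (hx : IsEvenElt Γ s x) :
    x ∈ Qspan Γ s hs := by
  rw [← Finsupp.sum_single x, Finsupp.sum]
  refine Submodule.sum_mem _ fun a ha => ?_
  cases a with
  | inl p =>
    have : Finsupp.single (Sum.inl p : Idx Γ s) (x (Sum.inl p))
        = x (Sum.inl p) • lgen Γ s (p.1 : ℂ) p.1.2 p.2 := by
      rw [lgen, Finsupp.smul_single, smul_eq_mul, mul_one]
    rw [this]
    exact Submodule.smul_mem _ _ (lgen_mem_Qspan Γ s hs _ _ _)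
  | inr q =>
    rw [hx q, Finsupp.single_zero]
    exact Submodule.zero_mem _

lemma even_of_mem_Qspan (hs : 2 * s ∈ Γ) (x : SV Γ s) (hx : x ∈ Qspan Γ s hs) :
    IsEvenElt Γ s x := by
  refine Submodule.span_induction ?_ ?_ ?_ ?_ hx
  · rintro _ ⟨y, rfl⟩; exact even_bkt_self Γ s hs y
  · intro q; simp
  · intro a b _ _ ha hb q; simp [ha q, hb q]
  · intro c a _ ha q; simp [ha q]

end Aux

/-- Every automorphism of `SV[Γ,s]` preserves the even part. -/
theorem aut_preserves_even_part (Γ : AddSubgroup ℂ) (hΓ : ∀ n : ℤ, (n : ℂ) ∈ Γ)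
    (s : ℂ) (hs : 2 * s ∈ Γ) :
    ∀ σ : SV Γ s →ₗ[ℂ] SV Γ s, Function.Bijective σ →
      (∀ x y : SV Γ s, σ (bkt Γ s hs x y) = bkt Γ s hs (σ x) (σ y)) →
      ∀ x : SV Γ s, IsEvenElt Γ s x → IsEvenElt Γ s (σ x) := by
  intro σ hbij hbr x hx
  have hQ : σ x ∈ Qspan Γ s hs := by
    have hxQ := even_mem_Qspan Γ s hs x hx
    refine Submodule.span_induction ?_ ?_ ?_ ?_ hxQ
    · rintro _ ⟨y, rfl⟩
      rw [hbr]
      exact Submodule.subset_span ⟨σ y, rfl⟩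
    · rw [map_zero]; exact Submodule.zero_mem _
    · intro a b _ _ ha hb; rw [map_add]; exact Submodule.add_mem _ ha hb
    · intro c a _ ha; rw [map_smul]; exact Submodule.smul_mem _ _ ha
  exact even_of_mem_Qspan Γ s hs _ hQ

end SVSuper
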